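/- Let a < b be real numbers, let G : [a,b] → ℝ be nondecreasing and right-continuous, and let f : [a,b] → ℝ. Suppose that f is Henstock–Kurzweil–Stieltjes integrable with respect to G on [a, y] for every y ∈ (a,b), and that A := lim_{y↗b} ∫ₐʸ f dG exists in ℝ. Then f is Henstock–Kurzweil–Stieltjes integrable with respect to G on [a,b] and ∫ₐᵇ f dG = A + f(b)·(G(b) − G(b⁻)), where G(b⁻) = lim_{y↗b} G(y). -/

import Mathlib

/-!
Fix `a = y₀ < y₁ < ⋯ → b`. On each ring `[yₖ, yₖ₊₁]` a single gauge approximates the integral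
over `[yₖ, c]` within `ε / 2 ^ (k + 1)` for every `c` in the ring at once, since a fine partition
of `[yₖ, c]` can always be completed to one of `[yₖ, yₖ₊₁]`. Gluing these gauges, and making every
`yⱼ` the tag of each interval that contains it, a fine partition of `[a, c]` with `c < b` splits
along the rings, so its sum is within `ε` of `∫ₐᶜ f dG` uniformly in `c < b`. At `b` the gauge
forces the last interval `[c, b]` of a fine partition of `[a, b]` to be tagged at `b` with `c`
close to `b`: it contributes `f b * (G b - G c) ≈ f b * (G b - G (b⁻))`, and the rest
contributes `≈ ∫ₐᶜ f dG ≈ A`.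
-/

open Filter Topology

/-- `f` is Henstock–Kurzweil–Stieltjes integrable with respect to `G` on `[a,b]`
with value `I`: for every `ε > 0` there is a gauge `δ : ℝ → (0,∞)` such that
every `δ`-fine tagged partition of `[a,b]` has Riemann–Stieltjes sum within `ε`
of `I`. -/
def IsHKSIntegral (f G : ℝ → ℝ) (a b I : ℝ) : Prop :=
  ∀ ε : ℝ, 0 < ε → ∃ δ : ℝ → ℝ, (∀ t : ℝ, 0 < δ t) ∧
    ∀ (n : ℕ) (x : Fin (n + 1) → ℝ) (t : Fin n → ℝ),
      Monotone x → x 0 = a → x (Fin.last n) = b →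
      (∀ i : Fin n, t i ∈ Set.Icc (x i.castSucc) (x i.succ)) →
      (∀ i : Fin n, Set.Icc (x i.castSucc) (x i.succ) ⊆
        Set.Ioo (t i - δ (t i)) (t i + δ (t i))) →
      |(∑ i : Fin n, f (t i) * (G (x i.succ) - G (x i.castSucc))) - I| < ε

open Set

/-- `FineSum f G δ a b s`: `s` is the Riemann–Stieltjes sum of some `δ`-fine tagged partition of
`[a, b]`, the partition being built from the left one tagged interval at a time. -/
inductive FineSum (f G δ : ℝ → ℝ) : ℝ → ℝ → ℝ → Prop
  | refl (a : ℝ) : FineSum f G δ a a 0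
  | snoc {a u v t s : ℝ} : FineSum f G δ a u s → t ∈ Icc u v →
      Icc u v ⊆ Ioo (t - δ t) (t + δ t) → FineSum f G δ a v (s + f t * (G v - G u))

namespace FineSum

variable {f G δ δ' : ℝ → ℝ} {a b c s s' : ℝ}

theorem le (h : FineSum f G δ a b s) : a ≤ b := by
  induction h with
  | refl => rfl
  | snoc _ ht _ ih => exact ih.trans (ht.1.trans ht.2)

theorem mono (h : FineSum f G δ a b s) (hδ : ∀ t ∈ Icc a b, δ t ≤ δ' t) :
    FineSum f G δ' a b s := by
  induction h with
  | refl => exact refl _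
  | snoc h ht hsub ih =>
    have htδ := hδ _ ⟨h.le.trans ht.1, ht.2⟩
    exact snoc (ih fun r hr => hδ r ⟨hr.1, hr.2.trans (ht.1.trans ht.2)⟩) ht
      (hsub.trans (Ioo_subset_Ioo (by linarith) (by linarith)))

theorem append (h : FineSum f G δ a b s) (h' : FineSum f G δ b c s') :
    FineSum f G δ a c (s + s') := by
  induction h' with
  | refl => simpa using h
  | snoc _ ht hsub ih => simpa only [add_assoc] using snoc ih ht hsub

theorem eq_zero_of_le (h : FineSum f G δ a b s) (hba : b ≤ a) : s = 0 := by
  induction h with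
  | refl => rfl
  | @snoc u v t s h ht _ ih =>
    obtain rfl : u = v := le_antisymm (ht.1.trans ht.2) (hba.trans h.le)
    simp [ih hba]

theorem of_fin : ∀ {n : ℕ} (x : Fin (n + 1) → ℝ) (t : Fin n → ℝ),
    (∀ i, t i ∈ Icc (x i.castSucc) (x i.succ)) →
    (∀ i, Icc (x i.castSucc) (x i.succ) ⊆ Ioo (t i - δ (t i)) (t i + δ (t i))) →
    FineSum f G δ (x 0) (x (Fin.last n)) (∑ i, f (t i) * (G (x i.succ) - G (x i.castSucc)))
  | 0, x, _, _, _ => by simpa using refl (x 0)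
  | _ + 1, x, t, htag, hfine => by
    have h := of_fin (fun i => x i.castSucc) (fun i => t i.castSucc)
      (fun i => htag i.castSucc) (fun i => hfine i.castSucc)
    rw [Fin.sum_univ_castSucc]
    simpa [Fin.succ_last] using snoc h (htag (Fin.last _)) (hfine (Fin.last _))

theorem exists_fin (h : FineSum f G δ a b s) :
    ∃ (n : ℕ) (x : Fin (n + 1) → ℝ) (t : Fin n → ℝ), x 0 = a ∧ x (Fin.last n) = b ∧
      (∀ i, t i ∈ Icc (x i.castSucc) (x i.succ)) ∧
      (∀ i, Icc (x i.castSucc) (x i.succ) ⊆ Ioo (t i - δ (t i)) (t i + δ (t i))) ∧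
      ∑ i, f (t i) * (G (x i.succ) - G (x i.castSucc)) = s := by
  induction h with
  | refl =>
    exact ⟨0, fun _ => a, Fin.elim0, rfl, rfl, fun i => i.elim0, fun i => i.elim0, by simp⟩
  | @snoc u v tv s _ ht hsub ih =>
    obtain ⟨n, x, t, hx0, hxn, htag, hfine, hsum⟩ := ih
    refine ⟨n + 1, Fin.snoc x v, Fin.snoc t tv, ?_, by simp, fun i => ?_, fun i => ?_, ?_⟩
    · rw [← Fin.castSucc_zero' (n := n + 1), Fin.snoc_castSucc, hx0]
    · induction i using Fin.lastCases <;>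
        simp [Fin.succ_last, Fin.succ_castSucc, -Fin.castSucc_succ, hxn, ht, htag]
    · induction i using Fin.lastCases <;>
        simp [Fin.succ_last, Fin.succ_castSucc, -Fin.castSucc_succ, hxn, hsub, hfine]
    · simp [Fin.sum_univ_castSucc, Fin.succ_last, Fin.succ_castSucc, -Fin.castSucc_succ,
        hxn, hsum]

/-- Cousin's lemma. -/
theorem exists_of_le (hδ : ∀ t, 0 < δ t) (hab : a ≤ b) : ∃ s, FineSum f G δ a b s := by
  set S := {x | x ≤ b ∧ ∃ s, FineSum f G δ a x s}
  have hS : BddAbove S := ⟨b, fun x hx => hx.1⟩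
  have haS : a ∈ S := ⟨hab, 0, refl a⟩
  set c := sSup S
  have hcb : c ≤ b := csSup_le ⟨a, haS⟩ fun x hx => hx.1
  obtain ⟨x, hxS, hcx⟩ := exists_lt_of_lt_csSup ⟨a, haS⟩ (sub_lt_self c (hδ c))
  obtain ⟨s, hs⟩ := hxS.2
  set d := min b (c + δ c / 2)
  have hd : FineSum f G δ a d (s + f c * (G d - G x)) :=
    snoc hs ⟨le_csSup hS hxS, le_min hcb (by linarith [hδ c])⟩ fun r hr =>
      ⟨hcx.trans_le hr.1, hr.2.trans_lt ((min_le_right _ _).trans_lt (by linarith [hδ c]))⟩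
  have hdc : d ≤ c := le_csSup hS ⟨min_le_left _ _, _, hd⟩
  have hdb : d = b := by
    rcases min_cases b (c + δ c / 2) with h | h
    · exact h.1
    · linarith [hδ c, h.1]
  exact ⟨_, hdb ▸ hd⟩

theorem split {w : ℝ} (h : FineSum f G δ a b s) (hw : w ∈ Icc a b)
    (hsep : ∀ t ∈ Icc a b, t ≠ w → δ t ≤ |t - w|) :
    ∃ s₁ s₂, s = s₁ + s₂ ∧ FineSum f G δ a w s₁ ∧ FineSum f G δ w b s₂ := by
  induction h with
  | refl =>
    obtain rfl : w = a := le_antisymm hw.2 hw.1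
    exact ⟨0, 0, by ring, refl w, refl w⟩
  | @snoc u v t s h ht hsub ih =>
    rcases le_or_gt w u with hwu | huw
    · obtain ⟨s₁, s₂, rfl, h₁, h₂⟩ :=
        ih ⟨hw.1, hwu⟩ fun r hr => hsep r ⟨hr.1, hr.2.trans (ht.1.trans ht.2)⟩
      exact ⟨s₁, s₂ + f t * (G v - G u), by ring, h₁, snoc h₂ ht hsub⟩
    · obtain rfl : t = w := by
        by_contra hne
        have hwt := hsub ⟨huw.le, hw.2⟩
        exact (hsep t ⟨h.le.trans ht.1, ht.2⟩ hne).not_gt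
          (abs_sub_lt_iff.2 ⟨by linarith [hwt.1], by linarith [hwt.2]⟩)
      exact ⟨s + f t * (G t - G u), 0 + f t * (G v - G t), by ring,
        snoc h ⟨ht.1, le_rfl⟩ fun r hr => hsub ⟨hr.1, hr.2.trans ht.2⟩,
        snoc (refl t) ⟨le_rfl, ht.2⟩ fun r hr => hsub ⟨ht.1.trans hr.1, hr.2⟩⟩

theorem exists_eq_add_last (h : FineSum f G δ a b s) (hab : a < b)
    (hδ : ∀ t ∈ Ico a b, t + δ t ≤ b) :
    ∃ c s₁, a ≤ c ∧ c < b ∧ b - δ b < c ∧ s = s₁ + f b * (G b - G c) ∧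
      FineSum f G δ a c s₁ := by
  induction h with
  | refl => exact absurd hab (lt_irrefl _)
  | @snoc u v t s h ht hsub ih =>
    obtain rfl : t = v := by
      by_contra hne
      linarith [hδ t ⟨h.le.trans ht.1, lt_of_le_of_ne ht.2 hne⟩,
        (hsub ⟨ht.1.trans ht.2, le_rfl⟩).2]
    rcases ht.1.eq_or_lt with rfl | hut
    · obtain ⟨c, s₁, hac, hcb, hδc, rfl, h₁⟩ := ih hab hδ
      exact ⟨c, s₁, hac, hcb, hδc, by ring, h₁⟩
    · exact ⟨u, s, h.le, hut, (hsub ⟨le_rfl, ht.1⟩).1, rfl, h⟩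

end FineSum

section Integral

variable {f G : ℝ → ℝ} {a b u v w I Iu Iv ε : ℝ}

theorem isHKSIntegral_iff : IsHKSIntegral f G a b I ↔ ∀ ε : ℝ, 0 < ε →
    ∃ δ : ℝ → ℝ, (∀ t, 0 < δ t) ∧ ∀ s, FineSum f G δ a b s → |s - I| < ε := by
  refine forall₂_congr fun ε _ => exists_congr fun δ => and_congr_right fun _ => ⟨?_, ?_⟩
  · intro h s hs
    obtain ⟨n, x, t, hx0, hxn, htag, hfine, rfl⟩ := hs.exists_fin
    exact h n x t (Fin.monotone_iff_le_succ.2 fun i => (htag i).1.trans (htag i).2)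
      hx0 hxn htag hfine
  · rintro h n x t - rfl rfl htag hfine
    exact h _ (FineSum.of_fin x t htag hfine)

theorem isHKSIntegral_self : IsHKSIntegral f G a a 0 :=
  isHKSIntegral_iff.2 fun _ hε => ⟨fun _ => 1, fun _ => one_pos, fun s hs => by
    simpa [hs.eq_zero_of_le le_rfl] using hε⟩

theorem IsHKSIntegral.interval_sub_left (hv : IsHKSIntegral f G a v Iv)
    (hu : IsHKSIntegral f G a u Iu) (hau : a ≤ u) : IsHKSIntegral f G u v (Iv - Iu) := by
  refine isHKSIntegral_iff.2 fun ε hε => ?_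
  obtain ⟨δu, hδu_pos, hδu⟩ := isHKSIntegral_iff.1 hu (ε / 2) (half_pos hε)
  obtain ⟨δv, hδv_pos, hδv⟩ := isHKSIntegral_iff.1 hv (ε / 2) (half_pos hε)
  have hδ_pos : ∀ t, 0 < min (δu t) (δv t) := fun t => lt_min (hδu_pos t) (hδv_pos t)
  refine ⟨_, hδ_pos, fun s hs => ?_⟩
  obtain ⟨s₀, hs₀⟩ := FineSum.exists_of_le (f := f) (G := G) hδ_pos hau
  have h₀ := hδu _ (hs₀.mono fun t _ => min_le_left _ _)
  have h₁ := hδv _ ((hs₀.append hs).mono fun t _ => min_le_right _ _)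
  rw [abs_lt] at *
  constructor <;> linarith

/-- The gauge does not depend on `c`: a fine partition of `[u, c]` is completed to one of
`[u, w]` by a partition of `[c, w]` that is also fine for a gauge adapted to `[c, w]`. -/
theorem exists_gauge_uniform_Icc {Φ : ℝ → ℝ} (huw : u ≤ w)
    (hΦ : ∀ c ∈ Icc u w, IsHKSIntegral f G c w (Φ w - Φ c)) (hε : 0 < ε) :
    ∃ δ : ℝ → ℝ, (∀ t, 0 < δ t) ∧
      ∀ c ∈ Icc u w, ∀ s, FineSum f G δ u c s → |s - (Φ c - Φ u)| < ε := by
  obtain ⟨δ₀, hδ₀_pos, hδ₀⟩ := isHKSIntegral_iff.1 (hΦ u ⟨le_rfl, huw⟩) (ε / 2) (half_pos hε)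
  refine ⟨δ₀, hδ₀_pos, fun c hc s hs => ?_⟩
  obtain ⟨δ₁, hδ₁_pos, hδ₁⟩ := isHKSIntegral_iff.1 (hΦ c hc) (ε / 2) (half_pos hε)
  obtain ⟨s', hs'⟩ := FineSum.exists_of_le (f := f) (G := G)
    (fun t => lt_min (hδ₀_pos t) (hδ₁_pos t)) hc.2
  have h₀ := hδ₀ _ (hs.append (hs'.mono fun t _ => min_le_left _ _))
  have h₁ := hδ₁ _ (hs'.mono fun t _ => min_le_right _ _)
  rw [abs_lt] at *
  constructor <;> linarith

end Integral

section Rings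

theorem exists_mem_Ico_succ {y : ℕ → ℝ} {t : ℝ} (h₀ : y 0 ≤ t) :
    ∀ {n : ℕ}, t < y n → ∃ k, t ∈ Ico (y k) (y (k + 1))
  | 0, hn => absurd h₀ hn.not_ge
  | n + 1, hn => (lt_or_ge t (y n)).elim (exists_mem_Ico_succ h₀) fun h => ⟨n, h, hn⟩

theorem exists_strictMono_seq {a b : ℝ} (hab : a < b) :
    ∃ y : ℕ → ℝ, StrictMono y ∧ y 0 = a ∧ (∀ k, y k < b) ∧ ∀ t < b, ∃ k, t < y k := by
  refine ⟨fun k => b - (b - a) * (1 / 2) ^ k, strictMono_nat_of_lt_succ fun k => ?_,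
    by simp, fun k => by simp only [sub_lt_self_iff]; positivity, fun t ht => ?_⟩
  · have : 0 < (b - a) * (1 / 2) ^ k := by positivity
    simp only [pow_succ]
    linarith
  · obtain ⟨k, hk⟩ := exists_pow_lt_of_lt_one (div_pos (sub_pos.2 ht) (sub_pos.2 hab))
      (by norm_num : (1 / 2 : ℝ) < 1)
    refine ⟨k, ?_⟩
    rw [lt_div_iff₀ (sub_pos.2 hab)] at hk
    linarith

theorem exists_pos_ring_gauge {y : ℕ → ℝ} {d : ℕ → ℝ} (hy : StrictMono y) (hd : ∀ k, 0 < d k)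
    {t : ℝ} {N : ℕ} (hN : t < y N) :
    ∃ r > 0, (∀ k, t ∈ Icc (y k) (y (k + 1)) → r ≤ d k) ∧ ∀ j, t ≠ y j → r ≤ |t - y j| := by
  have hle : ∀ {c : ℝ}, 0 < c → ∀ᶠ r in 𝓝[>] (0 : ℝ), r ≤ c := fun hc =>
    eventually_nhdsWithin_of_eventually_nhds (eventually_le_nhds hc)
  have hev : ∀ᶠ r in 𝓝[>] (0 : ℝ), 0 < r ∧ r ≤ y N - t ∧
      ∀ k ∈ Finset.range N, r ≤ d k ∧ (t ≠ y k → r ≤ |t - y k|) := by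
    refine eventually_mem_nhdsWithin.and <| (hle (sub_pos.2 hN)).and <|
      (eventually_all_finset _).2 fun k _ => (hle (hd k)).and ?_
    by_cases htk : t = y k
    · simp [htk]
    · simpa [htk] using hle (abs_pos.2 (sub_ne_zero.2 htk))
  obtain ⟨r, hr₀, hrN, hr⟩ := hev.exists
  refine ⟨r, hr₀, fun k hk => (hr k (Finset.mem_range.2 ?_)).1, fun j hj => ?_⟩
  · exact hy.lt_iff_lt.1 (hk.1.trans_lt hN)
  rcases lt_or_ge j N with hjN | hjN
  · exact (hr j (Finset.mem_range.2 hjN)).2 hj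
  · calc r ≤ y N - t := hrN
      _ ≤ y j - t := by linarith [hy.monotone hjN]
      _ ≤ |t - y j| := by rw [abs_sub_comm]; exact le_abs_self _

variable {f G δ Φ : ℝ → ℝ} {y : ℕ → ℝ} {D : ℕ → ℝ → ℝ} {b ε : ℝ}

theorem abs_fineSum_sub_lt_of_rings (hy : Monotone y) (hyb : ∀ k, y k < b)
    (hD : ∀ k, ∀ c ∈ Icc (y k) (y (k + 1)), ∀ s, FineSum f G (D k) (y k) c s →
      |s - (Φ c - Φ (y k))| < ε / 2 ^ (k + 1))
    (hδD : ∀ k, ∀ t ∈ Icc (y k) (y (k + 1)), δ t ≤ D k t)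
    (hδy : ∀ t < b, ∀ j, t ≠ y j → δ t ≤ |t - y j|) :
    ∀ j, ∀ c ∈ Icc (y j) (y (j + 1)), ∀ s, FineSum f G δ (y 0) c s →
      |s - (Φ c - Φ (y 0))| < ε - ε / 2 ^ (j + 1) := by
  have hring : ∀ k, ∀ c ∈ Icc (y k) (y (k + 1)), ∀ s, FineSum f G δ (y k) c s →
      |s - (Φ c - Φ (y k))| < ε / 2 ^ (k + 1) := fun k c hc s hs =>
    hD k c hc s (hs.mono fun t ht => hδD k t ⟨ht.1, ht.2.trans hc.2⟩)
  intro j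
  induction j with
  | zero =>
    intro c hc s hs
    have := hring 0 c hc s hs
    norm_num at this ⊢
    linarith
  | succ j ih =>
    intro c hc s hs
    obtain ⟨s₁, s₂, rfl, hs₁, hs₂⟩ := hs.split ⟨hy (Nat.zero_le _), hc.1⟩
      fun t ht => hδy t (ht.2.trans_lt ((hc.2.trans_lt (hyb _)))) _
    have h₁ := ih _ ⟨hy j.le_succ, le_rfl⟩ s₁ hs₁
    have h₂ := hring _ c hc s₂ hs₂
    have hε : ε / 2 ^ (j + 1 + 1) + ε / 2 ^ (j + 1 + 1) = ε / 2 ^ (j + 1) := by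
      rw [pow_succ]; ring
    rw [abs_lt] at *
    constructor <;> linarith

end Rings

section Hake

variable {f G Φ : ℝ → ℝ} {a b A Gb ε : ℝ}

theorem exists_gauge_uniform_Ico (hab : a < b)
    (hΦ : ∀ u ∈ Ico a b, ∀ w ∈ Ico u b, IsHKSIntegral f G u w (Φ w - Φ u)) (hε : 0 < ε) :
    ∃ δ : ℝ → ℝ, (∀ t, 0 < δ t) ∧
      ∀ c ∈ Ico a b, ∀ s, FineSum f G δ a c s → |s - (Φ c - Φ a)| < ε := by
  obtain ⟨y, hy, rfl, hyb, hy_cover⟩ := exists_strictMono_seq hab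
  have hring : ∀ k, ∀ c ∈ Icc (y k) (y (k + 1)),
      IsHKSIntegral f G c (y (k + 1)) (Φ (y (k + 1)) - Φ c) := fun k c hc =>
    hΦ c ⟨(hy.monotone (Nat.zero_le k)).trans hc.1, hc.2.trans_lt (hyb _)⟩ _ ⟨hc.2, hyb _⟩
  choose D hD_pos hD using fun k =>
    exists_gauge_uniform_Icc (hy k.lt_succ_self).le (hring k)
      (by positivity : 0 < ε / 2 ^ (k + 1))
  have hgauge : ∀ t, ∃ r > 0, t < b →
      (∀ k, t ∈ Icc (y k) (y (k + 1)) → r ≤ D k t) ∧ ∀ j, t ≠ y j → r ≤ |t - y j| := by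
    intro t
    by_cases htb : t < b
    · obtain ⟨N, hN⟩ := hy_cover t htb
      obtain ⟨r, hr, h⟩ := exists_pos_ring_gauge hy (fun k => hD_pos k t) hN
      exact ⟨r, hr, fun _ => h⟩
    · exact ⟨1, one_pos, fun h => absurd h htb⟩
  choose δ hδ_pos hδ using hgauge
  refine ⟨δ, hδ_pos, fun c hc s hs => ?_⟩
  obtain ⟨N, hN⟩ := hy_cover c hc.2
  obtain ⟨j, hj⟩ := exists_mem_Ico_succ hc.1 hN
  have := abs_fineSum_sub_lt_of_rings hy.monotone hyb hD
    (fun k t ht => (hδ t (ht.2.trans_lt (hyb _))).1 k ht) (fun t ht => (hδ t ht).2)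
    j c (Ico_subset_Icc_self hj) s hs
  linarith [(by positivity : 0 < ε / 2 ^ (j + 1))]

theorem isHKSIntegral_of_tendsto_nhdsLT (hab : a < b)
    (hΦ : ∀ u ∈ Ico a b, ∀ w ∈ Ico u b, IsHKSIntegral f G u w (Φ w - Φ u))
    (hA : Tendsto Φ (𝓝[<] b) (𝓝 A)) (hGb : Tendsto G (𝓝[<] b) (𝓝 Gb)) :
    IsHKSIntegral f G a b (A - Φ a + f b * (G b - Gb)) := by
  refine isHKSIntegral_iff.2 fun ε hε => ?_
  obtain ⟨δ₀, hδ₀_pos, hδ₀⟩ := exists_gauge_uniform_Ico hab hΦ (by positivity : 0 < ε / 3)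
  have hlim : ∀ᶠ c in 𝓝[<] b, |Φ c - A| < ε / 3 ∧ |f b * G c - f b * Gb| < ε / 3 := by
    have h₁ := Metric.tendsto_nhds.1 hA (ε / 3) (by positivity)
    have h₂ := Metric.tendsto_nhds.1 (hGb.const_mul (f b)) (ε / 3) (by positivity)
    simpa only [Real.dist_eq] using h₁.and h₂
  obtain ⟨β, hβb, hβ⟩ := mem_nhdsLT_iff_exists_Ioo_subset.1 hlim
  refine ⟨fun t => if t < b then min (δ₀ t) (b - t) else b - β, fun t => ?_, fun s hs => ?_⟩
  · dsimp only
    split_ifs with htb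
    exacts [lt_min (hδ₀_pos t) (sub_pos.2 htb), sub_pos.2 hβb]
  obtain ⟨c, s₁, hac, hcb, hβc, rfl, hs₁⟩ := hs.exists_eq_add_last hab fun t ht => by
    simp only [if_pos ht.2]
    linarith [min_le_right (δ₀ t) (b - t)]
  simp only [lt_irrefl, if_false, sub_sub_cancel] at hβc
  have h₁ := hδ₀ c ⟨hac, hcb⟩ s₁ <| hs₁.mono fun t ht => by
    simp only [if_pos (ht.2.trans_lt hcb)]
    exact min_le_left _ _
  obtain ⟨h₂, h₃⟩ := hβ ⟨hβc, hcb⟩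
  rw [abs_lt] at *
  constructor <;> linarith

end Hake

theorem stmt16_general (a b : ℝ) (hab : a < b) (G f F : ℝ → ℝ)
    (hF : ∀ y ∈ Set.Ioo a b, IsHKSIntegral f G a y (F y))
    (A Gb' : ℝ)
    (hA : Filter.Tendsto F (𝓝[<] b) (𝓝 A))
    (hGb' : Filter.Tendsto G (𝓝[<] b) (𝓝 Gb')) :
    IsHKSIntegral f G a b (A + f b * (G b - Gb')) := by
  -- `F a` is unconstrained by `hF`; the integral over `[a, a]` is `0`.
  set Φ := Function.update F a 0
  have hΦ : ∀ y ∈ Ico a b, IsHKSIntegral f G a y (Φ y) := by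
    rintro y ⟨hay, hyb⟩
    rcases hay.eq_or_lt with rfl | hay
    · simpa [Φ] using isHKSIntegral_self
    · simpa [Φ, hay.ne'] using hF y ⟨hay, hyb⟩
  have hΦA : Tendsto Φ (𝓝[<] b) (𝓝 A) := hA.congr' <|
    eventually_of_mem (Ioo_mem_nhdsLT hab) fun y hy => (Function.update_of_ne hy.1.ne' _ _).symm
  simpa [Φ] using isHKSIntegral_of_tendsto_nhdsLT hab
    (fun u hu w hw => (hΦ w ⟨hu.1.trans hw.1, hw.2⟩).interval_sub_left (hΦ u hu) hu.1) hΦA hGb'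

/-- Hake's theorem for the Henstock–Kurzweil–Stieltjes integral on a real
interval: if `G` is nondecreasing and right-continuous, `f` is `G`-integrable
on `[a, y]` for every `y ∈ (a, b)` with integral `F y`, and `F y → A` as
`y ↗ b`, then `f` is `G`-integrable on `[a,b]` with integral
`A + f b (G b − G(b⁻))`, where `G(b⁻)` is the left limit of `G` at `b`. -/
theorem stmt16 (a b : ℝ) (hab : a < b) (G f F : ℝ → ℝ)
    (hG_mono : Monotone G)
    (hG_rc : ∀ x : ℝ, ContinuousWithinAt G (Set.Ici x) x)
    (hF : ∀ y ∈ Set.Ioo a b, IsHKSIntegral f G a y (F y))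
    (A Gb' : ℝ)
    (hA : Filter.Tendsto F (𝓝[<] b) (𝓝 A))
    (hGb' : Filter.Tendsto G (𝓝[<] b) (𝓝 Gb')) :
    IsHKSIntegral f G a b (A + f b * (G b - Gb')) :=
  stmt16_general a b hab G f F hF A Gb' hA hGb'
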